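/- With λ the hyperbolic area measure on the upper half-plane and H as above, for every t ∈ (0,1) one has λ(H ∩ (H+t)) + λ(H ∩ (H+t-1)) = 2 log 2 + log(1/(2 sin(π t))). -/

import Mathlib

/-!
Horizontal translations preserve `λ`, so `λ(H ∩ (H + t - 1)) = λ(H ∩ (H + (1 - t)))` and it is
enough to show `λ(H ∩ (H + s)) = -log sin (π s / 2)` for `0 < s < 1`. Integrating `dy / y²`
first, the area above the graph of `g` over `S` is `∫_S dx / g x`. Since the boundary curve
`wedgeBoundary u = (2/π) tan (π u)` of `H` increases on `[0, 1/2)`, `H ∩ (H + s)` lies over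
`(s - 1/2, 1/2)` above the roof `wedgeBoundary (max |x| |x - s|)`, and the reflection
`x ↦ s - x` swaps its halves `x < s/2` and `x > s/2`. So the area is
`2 ∫_{s/2}^{1/2} (π/2) cot (π x) dx = -log sin (π s / 2)`, and the theorem follows from
`sin (π t / 2) sin (π (1 - t) / 2) = sin (π t) / 2`.
-/

open Real MeasureTheory

/-- The hyperbolic area measure `dx dy / y²`. -/
noncomputable def hypMeasure : Measure (ℝ × ℝ) :=
  volume.withDensity (fun p => ENNReal.ofReal (1 / p.2 ^ 2))

/-- The wedge-shaped region `H`. -/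
def wedgeH : Set (ℝ × ℝ) :=
  {p | -(1/2) < p.1 ∧ p.1 < 1/2 ∧ (2 / π) * Real.tan (π * |p.1|) < p.2}

/-- Horizontal translate of a planar set. -/
def htrans (A : Set (ℝ × ℝ)) (t : ℝ) : Set (ℝ × ℝ) := {p | (p.1 - t, p.2) ∈ A}

open Set

lemma lintegral_Ioi_ofReal_one_div_sq {c : ℝ} (hc : 0 < c) :
    ∫⁻ y in Ioi c, ENNReal.ofReal (1 / y ^ 2) = ENNReal.ofReal (1 / c) := by
  have hpow : EqOn (fun y : ℝ => 1 / y ^ 2) (fun y => y ^ (-2 : ℝ)) (Ioi c) := fun y hy => by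
    simp [rpow_neg (hc.trans hy).le]
  rw [setLIntegral_congr_fun measurableSet_Ioi (fun y hy => congrArg ENNReal.ofReal (hpow hy)),
    ← ofReal_integral_eq_lintegral_ofReal (integrableOn_Ioi_rpow_of_lt (by norm_num) hc)
      ((ae_restrict_mem measurableSet_Ioi).mono fun y hy => rpow_nonneg (hc.trans hy).le _),
    integral_Ioi_rpow_of_lt (by norm_num) hc]
  norm_num [rpow_neg_one]

lemma hypMeasure_setOf_lt {s : Set ℝ} (hs : MeasurableSet s) {g : ℝ → ℝ} (hg : Measurable g)
    (hg_pos : ∀ x ∈ s, 0 < g x) :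
    hypMeasure {p | p.1 ∈ s ∧ g p.1 < p.2} = ∫⁻ x in s, ENNReal.ofReal (1 / g x) := by
  set A := {p : ℝ × ℝ | p.1 ∈ s ∧ g p.1 < p.2}
  have hA : MeasurableSet A :=
    (hs.preimage measurable_fst).inter (measurableSet_lt (hg.comp measurable_fst) measurable_snd)
  have hρ : Measurable fun p : ℝ × ℝ => ENNReal.ofReal (1 / p.2 ^ 2) := by fun_prop
  have hslice : ∀ x, ∫⁻ y, A.indicator (fun p => ENNReal.ofReal (1 / p.2 ^ 2)) (x, y)
      = s.indicator (fun x => ENNReal.ofReal (1 / g x)) x := by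
    intro x
    by_cases hx : x ∈ s
    · rw [indicator_of_mem hx, ← lintegral_Ioi_ofReal_one_div_sq (hg_pos x hx),
        ← lintegral_indicator measurableSet_Ioi]
      congr with y
      simp only [indicator, A, mem_ofPred_eq, mem_Ioi, hx, true_and]
    · simp [indicator, A, hx]
  rw [hypMeasure, withDensity_apply _ hA, ← lintegral_indicator hA, Measure.volume_eq_prod,
    lintegral_prod _ (hρ.indicator hA).aemeasurable]
  simp_rw [hslice]
  exact lintegral_indicator hs _

lemma hypMeasure_htrans (A : Set (ℝ × ℝ)) (c : ℝ) : hypMeasure (htrans A c) = hypMeasure A := by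
  have hA : htrans A c = (· - (c, 0)) ⁻¹' A := by
    ext p
    simp [htrans, Prod.sub_def]
  rw [hA, hypMeasure, withDensity_apply', withDensity_apply']
  convert (measurePreserving_sub_right volume (c, 0)).setLIntegral_comp_preimage_emb
    (MeasurableEquiv.subRight (c, 0)).measurableEmbedding
    (fun q : ℝ × ℝ => ENNReal.ofReal (1 / q.2 ^ 2)) A using 3
  simp

lemma sin_pi_half_mul_sin_pi_half_one_sub (t : ℝ) :
    sin (π * (t / 2)) * sin (π * ((1 - t) / 2)) = sin (π * t) / 2 := by
  rw [show π * ((1 - t) / 2) = π / 2 - π * (t / 2) by ring, sin_pi_div_two_sub,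
    show π * t = 2 * (π * (t / 2)) by ring, sin_two_mul]
  ring

lemma sin_pi_mul_pos {x : ℝ} (h0 : 0 < x) (h1 : x < 1) : 0 < sin (π * x) :=
  sin_pos_of_pos_of_lt_pi (mul_pos pi_pos h0) (mul_lt_of_lt_one_right pi_pos h1)

lemma neg_log_sin_pi_mul_nonneg {x : ℝ} (h0 : 0 < x) (h1 : x < 1) : 0 ≤ -log (sin (π * x)) :=
  neg_nonneg.2 (log_nonpos (sin_pi_mul_pos h0 h1).le (sin_le_one _))

lemma hypMeasure_inter_htrans_neg (A : Set (ℝ × ℝ)) (c : ℝ) :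
    hypMeasure (A ∩ htrans A (-c)) = hypMeasure (A ∩ htrans A c) := by
  rw [← hypMeasure_htrans _ c]
  congr 1
  ext p
  simp only [htrans, mem_inter_iff, mem_ofPred_eq, sub_neg_eq_add, sub_add_cancel]
  exact and_comm

lemma setLIntegral_Ioc_comp_const_sub (F : ℝ → ENNReal) (s a b : ℝ) :
    ∫⁻ x in Ioc (s - b) (s - a), F (s - x) = ∫⁻ x in Ico a b, F x := by
  rw [← preimage_const_sub_Ico]
  exact (Measure.measurePreserving_sub_left volume s).setLIntegral_comp_preimage_emb
    (MeasurableEquiv.subLeft s).measurableEmbedding F _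

noncomputable def wedgeBoundary (u : ℝ) : ℝ := 2 / π * tan (π * u)

lemma measurable_wedgeBoundary : Measurable wedgeBoundary := by
  unfold wedgeBoundary
  simp_rw [tan_eq_sin_div_cos]
  fun_prop

lemma wedgeBoundary_strictMonoOn : StrictMonoOn wedgeBoundary (Ioo (-(1/2)) (1/2)) := by
  intro u hu v hv huv
  have hπ := pi_pos
  refine mul_lt_mul_of_pos_left (strictMonoOn_tan ?_ ?_ (by gcongr)) (by positivity) <;>
    constructor <;> nlinarith [hu.1, hu.2, hv.1, hv.2]

lemma wedgeBoundary_pos {u : ℝ} (h0 : 0 < u) (h1 : u < 1/2) : 0 < wedgeBoundary u := by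
  have hπ := pi_pos
  have := tan_pos_of_pos_of_lt_pi_div_two (x := π * u) (by positivity) (by nlinarith)
  unfold wedgeBoundary
  positivity

-- At `u = 1/2` both sides are `0`, by the convention `x / 0 = 0`.
lemma one_div_wedgeBoundary (u : ℝ) :
    1 / wedgeBoundary u = π / 2 * (cos (π * u) / sin (π * u)) := by
  simp only [wedgeBoundary, tan_eq_sin_div_cos, mul_inv, div_eq_mul_inv, inv_inv]
  ring

lemma lintegral_ofReal_one_div_wedgeBoundary {a b : ℝ} (ha : 0 < a) (hab : a ≤ b)
    (hb : b ≤ 1/2) :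
    ∫⁻ x in Ioo a b, ENNReal.ofReal (1 / wedgeBoundary x)
      = ENNReal.ofReal ((log (sin (π * b)) - log (sin (π * a))) / 2) := by
  have hπ := pi_pos
  have hsin : ∀ x ∈ Icc a b, 0 < sin (π * x) := fun x hx =>
    sin_pi_mul_pos (ha.trans_le hx.1) (by linarith [hx.2])
  have hcos : ∀ x ∈ Icc a b, 0 ≤ cos (π * x) := fun x hx =>
    cos_nonneg_of_mem_Icc ⟨by nlinarith [hx.1], by nlinarith [hx.2]⟩
  have hcont : ContinuousOn (fun x => 1 / wedgeBoundary x) (Icc a b) := by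
    simp_rw [one_div_wedgeBoundary]
    exact continuousOn_const.mul <|
      (by fun_prop : Continuous fun x => cos (π * x)).continuousOn.div (by fun_prop)
        fun x hx => (hsin x hx).ne'
  have hderiv : ∀ x ∈ Ioo a b,
      HasDerivAt (fun x => log (sin (π * x)) / 2) (1 / wedgeBoundary x) x := by
    intro x hx
    refine ((((hasDerivAt_id x).const_mul π).sin.log
      (hsin x (Ioo_subset_Icc_self hx)).ne').div_const 2).congr_deriv ?_
    rw [one_div_wedgeBoundary, id, mul_one]
    ring
  rw [Measure.restrict_congr_set Ioo_ae_eq_Ioc,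
    ← ofReal_integral_eq_lintegral_ofReal (hcont.integrableOn_Icc.mono_set Ioc_subset_Icc_self)
      ((ae_restrict_mem measurableSet_Ioc).mono fun x hx => ?_),
    ← intervalIntegral.integral_of_le hab,
    intervalIntegral.integral_eq_sub_of_hasDerivAt_of_le hab
      (((by fun_prop : Continuous fun x => sin (π * x)).continuousOn.log
        fun x hx => (hsin x hx).ne').div_const 2) hderiv
      (hcont.intervalIntegrable_of_Icc hab)]
  · ring_nf
  · have hx' := Ioc_subset_Icc_self hx
    show 0 ≤ 1 / wedgeBoundary x
    rw [one_div_wedgeBoundary]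
    have := hsin x hx'
    have := hcos x hx'
    positivity

lemma mem_wedgeH {p : ℝ × ℝ} : p ∈ wedgeH ↔ |p.1| < 1/2 ∧ wedgeBoundary |p.1| < p.2 := by
  rw [abs_lt, and_assoc]
  rfl

lemma wedgeH_inter_htrans {s : ℝ} (hs : 0 ≤ s) :
    wedgeH ∩ htrans wedgeH s
      = {p | p.1 ∈ Ioo (s - 1/2) (1/2) ∧ wedgeBoundary (max |p.1| |p.1 - s|) < p.2} := by
  ext ⟨x, y⟩
  have hmax : |x| < 1/2 → |x - s| < 1/2 →
      wedgeBoundary (max |x| |x - s|) = max (wedgeBoundary |x|) (wedgeBoundary |x - s|) :=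
    fun hx hxs => wedgeBoundary_strictMonoOn.monotoneOn.map_max
      ⟨by linarith [abs_nonneg x], hx⟩ ⟨by linarith [abs_nonneg (x - s)], hxs⟩
  rw [mem_inter_iff, htrans, mem_ofPred_eq, mem_wedgeH, mem_wedgeH]
  constructor
  · rintro ⟨⟨hx, hxy⟩, hxs, hxsy⟩
    refine ⟨⟨?_, ?_⟩, (hmax hx hxs).symm ▸ max_lt hxy hxsy⟩ <;>
      linarith [abs_lt.1 hx, abs_lt.1 hxs]
  · rintro ⟨⟨hx1, hx2⟩, hy⟩
    have hx : |x| < 1/2 := abs_lt.2 ⟨by linarith, hx2⟩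
    have hxs : |x - s| < 1/2 := abs_lt.2 ⟨by linarith, by linarith⟩
    rw [hmax hx hxs, max_lt_iff] at hy
    exact ⟨⟨hx, hy.1⟩, hxs, hy.2⟩

lemma hypMeasure_wedgeH_inter_htrans {s : ℝ} (hs0 : 0 < s) (hs1 : s < 1) :
    hypMeasure (wedgeH ∩ htrans wedgeH s) = ENNReal.ofReal (-log (sin (π * (s / 2)))) := by
  set F := fun x => ENNReal.ofReal (1 / wedgeBoundary x)
  have hroof_pos : ∀ x ∈ Ioo (s - 1/2) (1/2), 0 < wedgeBoundary (max |x| |x - s|) := by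
    rintro x ⟨hx1, hx2⟩
    refine wedgeBoundary_pos ?_
      (max_lt (abs_lt.2 ⟨by linarith, hx2⟩) (abs_lt.2 ⟨by linarith, by linarith⟩))
    rcases lt_or_ge 0 x with hx | hx
    · exact lt_max_of_lt_left (abs_pos.2 hx.ne')
    · exact lt_max_of_lt_right (abs_pos.2 (by linarith))
  have hleft : ∫⁻ x in Ioc (s - 1/2) (s/2), F (max |x| |x - s|) = ∫⁻ x in Ioo (s/2) (1/2), F x :=
    calc ∫⁻ x in Ioc (s - 1/2) (s/2), F (max |x| |x - s|)
        = ∫⁻ x in Ioc (s - 1/2) (s - s/2), F (s - x) := by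
          rw [sub_half]
          refine setLIntegral_congr_fun measurableSet_Ioc fun x hx => ?_
          rw [abs_sub_comm, abs_of_pos (a := s - x) (by linarith [hx.2]),
            max_eq_right (abs_le.2 ⟨by linarith, by linarith [hx.2]⟩)]
      _ = ∫⁻ x in Ioo (s/2) (1/2), F x := by
          rw [setLIntegral_Ioc_comp_const_sub, setLIntegral_congr Ioo_ae_eq_Ico]
  have hright : ∫⁻ x in Ioo (s/2) (1/2), F (max |x| |x - s|) = ∫⁻ x in Ioo (s/2) (1/2), F x := by
    refine setLIntegral_congr_fun measurableSet_Ioo fun x hx => ?_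
    rw [abs_of_pos (by linarith [hx.1]),
      max_eq_left (abs_le.2 ⟨by linarith [hx.1], by linarith⟩)]
  have hhalf : ∫⁻ x in Ioo (s/2) (1/2), F x = ENNReal.ofReal (-log (sin (π * (s / 2))) / 2) := by
    rw [lintegral_ofReal_one_div_wedgeBoundary (by positivity) (by linarith) le_rfl,
      mul_one_div, sin_pi_div_two, log_one, zero_sub]
  have hnonneg : 0 ≤ -log (sin (π * (s / 2))) / 2 :=
    div_nonneg (neg_log_sin_pi_mul_nonneg (by positivity) (by linarith)) zero_le_two
  rw [wedgeH_inter_htrans hs0.le,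
    hypMeasure_setOf_lt (g := fun x => wedgeBoundary (max |x| |x - s|)) measurableSet_Ioo
      (measurable_wedgeBoundary.comp (by fun_prop)) hroof_pos,
    ← Ioc_union_Ioo_eq_Ioo (b := s/2) (by linarith) (by linarith),
    lintegral_union measurableSet_Ioo (Ioc_disjoint_Ioi_same.mono_right Ioo_subset_Ioi_self),
    hleft, hright, hhalf, ← ENNReal.ofReal_add hnonneg hnonneg, add_halves]

/-- For `t ∈ (0,1)`,
`λ(H ∩ (H+t)) + λ(H ∩ (H+t-1)) = 2 log 2 + log (1/(2 sin (π t)))`. -/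
theorem hyp_area_wedge_covariance (t : ℝ) (ht0 : 0 < t) (ht1 : t < 1) :
    hypMeasure (wedgeH ∩ htrans wedgeH t) + hypMeasure (wedgeH ∩ htrans wedgeH (t - 1))
      = ENNReal.ofReal (2 * Real.log 2 + Real.log (1 / (2 * Real.sin (π * t)))) := by
  have hlog : -log (sin (π * (t / 2))) + -log (sin (π * ((1 - t) / 2)))
      = 2 * log 2 + log (1 / (2 * sin (π * t))) := by
    rw [← neg_add, ← log_mul (sin_pi_mul_pos (by linarith) (by linarith)).ne'
        (sin_pi_mul_pos (by linarith) (by linarith)).ne', sin_pi_half_mul_sin_pi_half_one_sub,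
      one_div, log_inv, log_div (sin_pi_mul_pos ht0 ht1).ne' two_ne_zero,
      log_mul two_ne_zero (sin_pi_mul_pos ht0 ht1).ne']
    ring
  rw [← hypMeasure_inter_htrans_neg _ (t - 1), neg_sub, hypMeasure_wedgeH_inter_htrans ht0 ht1,
    hypMeasure_wedgeH_inter_htrans (by linarith) (by linarith), ← hlog,
    ENNReal.ofReal_add (neg_log_sin_pi_mul_nonneg (by linarith) (by linarith))
      (neg_log_sin_pi_mul_nonneg (by linarith) (by linarith))]
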